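/- Define, for integers n ≥ 3 and 1 ≤ i ≤ n−2, the coefficients α_i = (sin(π/n)/(2cos(π/2n)))·√(1/(sin(iπ/n)·sin((i+1)π/n))), β_i = (−1/(2cos(π/2n)))·√(sin((i+1)π/n)/sin(iπ/n)), γ_i = (1/(2cos(π/2n)))·√(sin(iπ/n)/sin((i+1)π/n)). Then cos(π/2n)·[n + n/(2cos²(π/2n)) + Σ_{i=1}^{n−2}(α_i² + β_i² + γ_i²)] = 2n·cos(π/2n). -/

import Mathlib

/-!
With θ = π/n, c = cos(θ/2) and s_i = sin(iθ), the summand α_i² + β_i² + γ_i² is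
(sin²θ + s_i² + s_{i+1}²) / (4c² s_i s_{i+1}). The identity s_i² + s_{i+1}² = 2 cos θ s_i s_{i+1} + sin²θ
and sin θ / (s_i s_{i+1}) = cot(iθ) - cot((i+1)θ) turn it into (cos θ + sin θ (cot(iθ) - cot((i+1)θ))) / (2c²).
The cotangents telescope to 2 cot θ because cot((n-1)θ) = -cot θ, so the sum is n cos θ / (2c²), and the
half-angle formula 2c² = 1 + cos θ collapses the bracket to 2n.
-/

open Real Finset

lemma sin_sq_add_sin_add_sq (x θ : ℝ) :
    sin x ^ 2 + sin (x + θ) ^ 2 = 2 * cos θ * sin x * sin (x + θ) + sin θ ^ 2 := by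
  rw [sin_add]
  linear_combination sin θ ^ 2 * sin_sq_add_cos_sq x - sin x ^ 2 * sin_sq_add_cos_sq θ

lemma sin_div_sin_mul_sin_add {x θ : ℝ} (hx : sin x ≠ 0) (hxθ : sin (x + θ) ≠ 0) :
    sin θ / (sin x * sin (x + θ)) = cot x - cot (x + θ) := by
  have hθ : sin θ = sin (x + θ) * cos x - cos (x + θ) * sin x := by
    rw [← sin_sub, add_sub_cancel_left]
  rw [cot_eq_cos_div_sin, cot_eq_cos_div_sin, div_sub_div _ _ hx hxθ, hθ]
  ring

lemma cot_pi_sub (x : ℝ) : cot (π - x) = -cot x := by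
  rw [cot_eq_cos_div_sin, cot_eq_cos_div_sin, sin_pi_sub, cos_pi_sub, neg_div]

lemma sin_nat_mul_pi_div_pos {i n : ℕ} (hi : 0 < i) (hin : i < n) : 0 < sin (i * π / n) := by
  have hn : (0 : ℝ) < n := by exact_mod_cast hi.trans hin
  apply sin_pos_of_pos_of_lt_pi (by positivity)
  rw [div_lt_iff₀ hn, mul_comm]
  exact mul_lt_mul_of_pos_left (by exact_mod_cast hin) pi_pos

lemma cos_pi_div_two_mul_pos {n : ℕ} (hn : 2 ≤ n) : 0 < cos (π / (2 * n)) := by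
  have hn0 : (0 : ℝ) < n := by exact_mod_cast (by omega : 0 < n)
  apply cos_pos_of_mem_Ioo ⟨by linarith [pi_pos, show 0 < π / (2 * n) by positivity], ?_⟩
  rw [div_lt_div_iff_of_pos_left pi_pos (by positivity) two_pos]
  linarith [show (2 : ℝ) ≤ n by exact_mod_cast hn]

lemma sum_Icc_cot_sub_cot {n : ℕ} (hn : 3 ≤ n) :
    ∑ i ∈ Icc 1 (n - 2), (cot (i * π / n) - cot ((i + 1) * π / n)) = 2 * cot (π / n) := by
  have htel := sum_Icc_sub (f := fun i : ℕ ↦ -cot (i * π / n)) (by omega : 1 ≤ n - 2)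
  have hlast : (((n - 2 : ℕ) : ℝ) + 1) * π / n = π - π / n := by
    rw [Nat.cast_sub (by omega)]
    field_simp
    ring
  push_cast at htel
  rw [hlast, cot_pi_sub] at htel
  simp only [neg_sub_neg, neg_neg, one_mul] at htel
  rw [htel]
  ring

lemma sos_summand_eq (x θ c : ℝ) (hx : 0 < sin x) (hxθ : 0 < sin (x + θ)) :
    (sin θ / (2 * c) * √(1 / (sin x * sin (x + θ)))) ^ 2 + (-1 / (2 * c) * √(sin (x + θ) / sin x)) ^ 2
      + (1 / (2 * c) * √(sin x / sin (x + θ))) ^ 2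
      = (cos θ + sin θ * (cot x - cot (x + θ))) / (2 * c ^ 2) := by
  rw [mul_pow, mul_pow, mul_pow, sq_sqrt (by positivity), sq_sqrt (by positivity),
    sq_sqrt (by positivity), ← sin_div_sin_mul_sin_add hx.ne' hxθ.ne']
  rcases eq_or_ne c 0 with rfl | hc
  · simp
  field_simp
  linear_combination sin_sq_add_sin_add_sq x θ

theorem sos_identity_coefficient (n : ℕ) (hn : 3 ≤ n)
    (α β γ : ℕ → ℝ)
    (hα : ∀ i, α i = Real.sin (Real.pi / n) / (2 * Real.cos (Real.pi / (2 * n))) *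
      Real.sqrt (1 / (Real.sin (i * Real.pi / n) * Real.sin ((i + 1) * Real.pi / n))))
    (hβ : ∀ i, β i = -1 / (2 * Real.cos (Real.pi / (2 * n))) *
      Real.sqrt (Real.sin ((i + 1) * Real.pi / n) / Real.sin (i * Real.pi / n)))
    (hγ : ∀ i, γ i = 1 / (2 * Real.cos (Real.pi / (2 * n))) *
      Real.sqrt (Real.sin (i * Real.pi / n) / Real.sin ((i + 1) * Real.pi / n))) :
    Real.cos (Real.pi / (2 * n)) *
      (n + n / (2 * Real.cos (Real.pi / (2 * n)) ^ 2) +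
        ∑ i ∈ Finset.Icc 1 (n - 2), (α i ^ 2 + β i ^ 2 + γ i ^ 2)) =
      2 * n * Real.cos (Real.pi / (2 * n)) := by
  have hc := cos_pi_div_two_mul_pos (by omega : 2 ≤ n)
  have hhalf : 2 * cos (π / (2 * n)) ^ 2 = 1 + cos (π / n) := by
    rw [cos_sq, show 2 * (π / (2 * n)) = π / n by field_simp]
    ring
  have hsin : sin (π / n) * (2 * cot (π / n)) = 2 * cos (π / n) := by
    have hpos := sin_nat_mul_pi_div_pos (i := 1) one_pos (by omega : 1 < n)
    rw [Nat.cast_one, one_mul] at hpos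
    rw [cot_eq_cos_div_sin]
    field_simp
  have hsummand : ∀ i ∈ Icc 1 (n - 2), α i ^ 2 + β i ^ 2 + γ i ^ 2 =
      (cos (π / n) + sin (π / n) * (cot (i * π / n) - cot ((i + 1) * π / n)))
        / (2 * cos (π / (2 * n)) ^ 2) := by
    intro i hi
    obtain ⟨hi1, hi2⟩ := mem_Icc.1 hi
    have hshift : ((i : ℝ) + 1) * π / n = i * π / n + π / n := by ring
    have hnext := sin_nat_mul_pi_div_pos (i := i + 1) (n := n) (by omega) (by omega)
    push_cast at hnext
    rw [hshift] at hnext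
    rw [hα, hβ, hγ, hshift]
    exact sos_summand_eq _ _ _ (sin_nat_mul_pi_div_pos (by omega) (by omega)) hnext
  rw [sum_congr rfl hsummand, ← sum_div, sum_add_distrib, sum_const, ← mul_sum,
    sum_Icc_cot_sub_cot hn, hsin, Nat.card_Icc, nsmul_eq_mul, show n - 2 + 1 - 1 = n - 2 by omega,
    Nat.cast_sub (by omega)]
  field_simp
  linear_combination (-(n : ℝ)) * hhalf
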